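/- Suppose all eight social alignment parameters s₁₁, s₁₂, s₂₁, s₂₂, s̃₁₁, s̃₁₂, s̃₂₁, s̃₂₂ are positive and all four mutation rates m₁, m̃₁, m₂, m̃₂ lie in the interval [0, 1]. Then the set of equilibria of the general two-strategy, two-population convergence–divergence game in the unit square, {(x,y) ∈ [0,1] × [0,1] : G₁(x,y) = 0 and G₂(x,y) = 0}, is finite and has at most nine elements. -/

import Mathlib

/-!
`G₁` is affine in `y`, `G₁ = P(x) + Q(x) y`, and `G₂` is a cubic in `y` whose leading
coefficient does not vanish on `[0, 1]`. Eliminating `y` gives `F = Q³ · G₂(x, -P/Q)`, a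
polynomial of degree at most `10` vanishing at the first coordinate of every equilibrium. The
equilibria above a given `x` number at most one if `Q(x) ≠ 0`, and at most three if
`P(x) = Q(x) = 0`, in which case `x` is a root of `F` of multiplicity at least three; so there are
at most as many equilibria as roots of `F` in `[0, 1]`, counted with multiplicity.

`P` and `Q` share the factor `X` exactly when `m₁ = 0` and `1 - X` exactly when `m̃₁ = 0`.
Dividing it out, `F = (Xᵃ (1 - X)ᵇ)³ F'` with `deg F' ≤ 10 - 3(a + b)`. Since `G₂(0, y) > 0` for
`y < 0` and `G₂(1, y) < 0` for `y > 1`, the values `F'(0)` and `F'(1)` have the signs that forbid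
all roots of `F'` from lying in `[0, 1]`. Hence `F` has at most `3(a + b) + 9 - 3(a + b) = 9`
roots there.
-/

noncomputable def G1 (s11 s12 st11 st12 m1 mt1 : ℝ) (x y : ℝ) : ℝ :=
  ((1 - x) - mt1) * x * (s11 * x + s12 * (1 - y) * x) -
    (x - m1) * (1 - x) * (st11 * (1 - x) + st12 * y * (1 - x))

noncomputable def G2 (s21 s22 st21 st22 m2 mt2 : ℝ) (x y : ℝ) : ℝ :=
  ((1 - y) - mt2) * y * (s22 * y + s21 * (1 - x) * y) -
    (y - m2) * (1 - y) * (st22 * (1 - y) + st21 * x * (1 - y))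

open Polynomial Set

theorem Set.eq_biUnion_image_mk {α β : Type*} {E : Set (α × β)} {T : Set α}
    (hT : ∀ p ∈ E, p.1 ∈ T) : E = ⋃ x ∈ T, Prod.mk x '' {y | (x, y) ∈ E} := by
  ext ⟨x, y⟩
  simp only [mem_iUnion, mem_image, mem_ofPred_eq, Prod.mk.injEq, exists_prop]
  exact ⟨fun h => ⟨x, hT _ h, y, h, rfl, rfl⟩, by rintro ⟨_, _, _, h, rfl, rfl⟩; exact h⟩

theorem card_roots_filter_mul_le {R : Type*} [CommRing R] [IsDomain R] {p q : R[X]}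
    (hpq : p * q ≠ 0) (s : Set R) [DecidablePred (· ∈ s)] :
    Multiset.card ((p * q).roots.filter (· ∈ s)) ≤
      p.natDegree + Multiset.card (q.roots.filter (· ∈ s)) := by
  rw [roots_mul hpq, Multiset.filter_add, Multiset.card_add]
  exact Nat.add_le_add_right
    ((Multiset.card_le_card (Multiset.filter_le _ _)).trans (card_roots' p)) _

-- If all `D` roots `r` lay in `[a, b]`, then `(-1) ^ D f(a) f(b) = lc² ∏ (r - a)(b - r) ≥ 0`.
theorem card_roots_filter_Icc_lt {f : ℝ[X]} {a b : ℝ} {D : ℕ} (hdeg : f.natDegree ≤ D)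
    (hsign : (-1) ^ D * f.eval a * f.eval b < 0) :
    Multiset.card (f.roots.filter (· ∈ Icc a b)) < D := by
  by_contra! hge
  have hfilter : f.roots.filter (· ∈ Icc a b) ≤ f.roots := Multiset.filter_le _ _
  have hcard : Multiset.card f.roots = D :=
    le_antisymm ((card_roots' f).trans hdeg) (hge.trans (Multiset.card_le_card hfilter))
  have hall : ∀ r ∈ f.roots, r ∈ Icc a b :=
    Multiset.filter_eq_self.1 (Multiset.eq_of_le_of_card_le hfilter (by omega) :
      f.roots.filter (· ∈ Icc a b) = f.roots)
  have hsplit := C_leadingCoeff_mul_prod_multiset_X_sub_C (hcard.trans (by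
    have := card_roots' f; omega))
  have hprod : (-1) ^ D * f.eval a * f.eval b =
      f.leadingCoeff ^ 2 * (f.roots.map fun r => (r - a) * (b - r)).prod := by
    have heval (x : ℝ) : f.eval x = f.leadingCoeff * (f.roots.map fun r => x - r).prod := by
      conv_lhs => rw [← hsplit]
      simp [eval_multiset_prod]
    rw [heval a, heval b, ← hcard]
    rw [show (fun r => (r - a) * (b - r)) = fun r => -1 * ((a - r) * (b - r)) from
      funext fun r => by ring, Multiset.prod_map_mul, Multiset.prod_map_mul,
      Multiset.map_const', Multiset.prod_replicate]
    ring
  have : 0 ≤ (f.roots.map fun r => (r - a) * (b - r)).prod :=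
    Multiset.prod_nonneg fun x hx => by
      obtain ⟨r, hr, rfl⟩ := Multiset.mem_map.1 hx
      exact mul_nonneg (sub_nonneg.2 (hall r hr).1) (sub_nonneg.2 (hall r hr).2)
  nlinarith [sq_nonneg f.leadingCoeff]

/-- `Q³ g(-P/Q)`, the resultant of `g` and `P + QY` up to sign. -/
def Cubic.linResultant {R : Type*} [CommRing R] (g : Cubic R) (P Q : R) : R :=
  g.d * Q ^ 3 - g.c * Q ^ 2 * P + g.b * Q * P ^ 2 - g.a * P ^ 3

namespace Cubic

section CommRing

variable {R : Type*} [CommRing R] (g : Cubic R)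

theorem linResultant_eq_of_add_mul_eq_zero {P Q y : R} (h : P + Q * y = 0) :
    g.linResultant P Q = Q ^ 3 * (g.a * y ^ 3 + g.b * y ^ 2 + g.c * y + g.d) := by
  rw [eq_neg_of_add_eq_zero_left h, linResultant]
  ring

theorem linResultant_mul (r P Q : R) :
    g.linResultant (r * P) (r * Q) = r ^ 3 * g.linResultant P Q := by
  simp only [linResultant]
  ring

theorem map_linResultant {S : Type*} [CommRing S] (φ : R →+* S) (P Q : R) :
    φ (g.linResultant P Q) = (g.map φ).linResultant (φ P) (φ Q) := by
  simp [linResultant, Cubic.map]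

end CommRing

theorem natDegree_linResultant_le {R : Type*} [CommRing R] {g : Cubic R[X]} {P Q : R[X]}
    {e d : ℕ} (ha : g.a.natDegree ≤ e) (hb : g.b.natDegree ≤ e) (hc : g.c.natDegree ≤ e)
    (hd : g.d.natDegree ≤ e) (hP : P.natDegree ≤ d) (hQ : Q.natDegree ≤ d) :
    (g.linResultant P Q).natDegree ≤ e + 3 * d := by
  have hP' (i : ℕ) := natDegree_pow_le_of_le i hP
  have hQ' (i : ℕ) := natDegree_pow_le_of_le i hQ
  refine natDegree_sub_le_iff_left ?_ |>.2 <| natDegree_add_le_of_degree_le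
    (natDegree_sub_le_iff_left ?_ |>.2 ?_) ?_
  · exact (natDegree_mul_le_of_le ha (hP' 3)).trans (by omega)
  · exact (natDegree_mul_le_of_le (natDegree_mul_le_of_le hc (hQ' 2)) hP).trans (by omega)
  · exact (natDegree_mul_le_of_le hd (hQ' 3)).trans (by omega)
  · exact (natDegree_mul_le_of_le (natDegree_mul_le_of_le hb hQ) (hP' 2)).trans (by omega)

theorem ncard_le_rootMultiplicity_linResultant {K : Type*} [Field K] {g : Cubic K[X]}
    {P Q : K[X]} (hF : g.linResultant P Q ≠ 0) {x : K} (ha : g.a.eval x ≠ 0) {Y : Set K}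
    (hY : ∀ y ∈ Y, P.eval x + Q.eval x * y = 0 ∧ (g.map (evalRingHom x)).toPoly.eval y = 0) :
    Y.Finite ∧ Y.ncard ≤ (g.linResultant P Q).rootMultiplicity x := by
  classical
  set gx := g.map (evalRingHom x)
  have hgx : gx.toPoly ≠ 0 := ne_zero_of_a_ne_zero ha
  have hsub : Y ⊆ gx.roots.toFinset := fun y hy => by
    simpa [Cubic.roots, mem_roots hgx] using (hY y hy).2
  have hle3 : Y.ncard ≤ 3 :=
    (ncard_le_ncard hsub (Finset.finite_toSet _)).trans
      ((ncard_coe_finset _).trans_le card_roots_le)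
  have hfin : Y.Finite := (Finset.finite_toSet _).subset hsub
  refine ⟨hfin, ?_⟩
  obtain rfl | ⟨y₀, hy₀⟩ := Y.eq_empty_or_nonempty
  · simp
  obtain ⟨hlin, hcub⟩ := hY y₀ hy₀
  by_cases hQ : Q.eval x = 0
  · have hP : P.eval x = 0 := by simpa [hQ] using hlin
    obtain ⟨P', rfl⟩ := dvd_iff_isRoot.2 hP
    obtain ⟨Q', rfl⟩ := dvd_iff_isRoot.2 hQ
    rw [linResultant_mul] at hF ⊢
    exact hle3.trans ((le_rootMultiplicity_iff hF).2 (dvd_mul_right _ _))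
  · have hroot : (g.linResultant P Q).IsRoot x := by
      have hcub' : gx.a * y₀ ^ 3 + gx.b * y₀ ^ 2 + gx.c * y₀ + gx.d = 0 := by
        simpa [toPoly] using hcub
      rw [IsRoot, ← coe_evalRingHom, map_linResultant, coe_evalRingHom,
        linResultant_eq_of_add_mul_eq_zero _ hlin, hcub', mul_zero]
    have hone : Y.ncard ≤ 1 := (ncard_le_one hfin).2 fun y₁ hy₁ y₂ hy₂ =>
      mul_left_cancel₀ hQ (by linear_combination (hY y₁ hy₁).1 - (hY y₂ hy₂).1)
    exact hone.trans ((rootMultiplicity_pos hF).2 hroot)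

theorem ncard_le_card_roots_linResultant {K : Type*} [Field K] {g : Cubic K[X]} {P Q : K[X]}
    (hF : g.linResultant P Q ≠ 0) {S : Set K} [DecidablePred (· ∈ S)]
    (ha : ∀ x ∈ S, g.a.eval x ≠ 0) {E : Set (K × K)}
    (hE : ∀ p ∈ E, p.1 ∈ S ∧ P.eval p.1 + Q.eval p.1 * p.2 = 0 ∧
      (g.map (evalRingHom p.1)).toPoly.eval p.2 = 0) :
    E.Finite ∧ E.ncard ≤ Multiset.card ((g.linResultant P Q).roots.filter (· ∈ S)) := by
  classical
  set M := (g.linResultant P Q).roots.filter (· ∈ S)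
  have hfiber (x : K) (hx : x ∈ S) := ncard_le_rootMultiplicity_linResultant hF (ha x hx)
    (Y := {y | (x, y) ∈ E}) fun y hy => (hE _ hy).2
  have hcount (x : K) (hx : x ∈ S) : M.count x = (g.linResultant P Q).rootMultiplicity x := by
    rw [Multiset.count_filter_of_pos hx, count_roots]
  have hfst : ∀ p ∈ E, p.1 ∈ (M.toFinset : Set K) := fun p hp => by
    have hS := (hE p hp).1
    obtain ⟨hfin, hle⟩ := hfiber p.1 hS
    have hpos : 0 < {y | (p.1, y) ∈ E}.ncard := (ncard_pos hfin).2 ⟨p.2, hp⟩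
    rw [Finset.mem_coe, Multiset.mem_toFinset, ← Multiset.count_pos, hcount _ hS]
    omega
  have hfiber' (x : K) (hx : x ∈ M.toFinset) : {y | (x, y) ∈ E}.Finite ∧
      {y | (x, y) ∈ E}.ncard ≤ M.count x := by
    have hS : x ∈ S := (Multiset.mem_filter.1 (Multiset.mem_toFinset.1 hx)).2
    rw [hcount x hS]
    exact hfiber x hS
  have hE_eq := eq_biUnion_image_mk hfst
  refine ⟨hE_eq ▸ M.toFinset.finite_toSet.biUnion fun x hx => (hfiber' x hx).1.image _, ?_⟩
  calc E.ncard = (⋃ x ∈ (M.toFinset : Set K), Prod.mk x '' {y | (x, y) ∈ E}).ncard :=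
        congrArg ncard hE_eq
    _ ≤ ∑ x ∈ M.toFinset, (Prod.mk x '' {y | (x, y) ∈ E}).ncard :=
        Finset.set_ncard_biUnion_le _ _
    _ ≤ ∑ x ∈ M.toFinset, M.count x := Finset.sum_le_sum fun x hx => by
        rw [ncard_image_of_injective _ (Prod.mk_right_injective x)]
        exact (hfiber' x hx).2
    _ = Multiset.card M := Multiset.toFinset_sum_count_eq M

end Cubic

noncomputable def g2Cubic (s21 s22 st21 st22 m2 mt2 : ℝ) : Cubic ℝ[X] where
  a := -(C s22 + C s21 * (1 - X) + (C st22 + C st21 * X))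
  b := C (1 - mt2) * (C s22 + C s21 * (1 - X)) + C (2 + m2) * (C st22 + C st21 * X)
  c := -(C (1 + 2 * m2) * (C st22 + C st21 * X))
  d := C m2 * (C st22 + C st21 * X)

/-- With `U = 1 - m̃₁ - X`, `V = X - m₁` and `i = j = 2`, `G₁(x, y) = P(x) + Q(x) y` for
`P = g1Const …` and `Q = g1Slope …`; smaller `i`, `j` describe `P` and `Q` with a common factor
`X` or `1 - X` removed. -/
noncomputable def g1Const (s11 s12 st11 : ℝ) (U V : ℝ[X]) (i j : ℕ) : ℝ[X] :=
  C (s11 + s12) * U * X ^ i - C st11 * V * (1 - X) ^ j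

noncomputable def g1Slope (s12 st12 : ℝ) (U V : ℝ[X]) (i j : ℕ) : ℝ[X] :=
  -(C s12 * U * X ^ i + C st12 * V * (1 - X) ^ j)

theorem exists_mul_X_pow_eq_X_sub_C {m : ℝ} (hm : 0 ≤ m) :
    ∃ a ≤ 1, ∃ v : ℝ[X], v * X ^ a = X - C m ∧ v.natDegree + a ≤ 1 ∧ (-1) ^ a * v.eval 0 < 0 := by
  obtain rfl | hm := hm.eq_or_lt
  · exact ⟨1, le_rfl, 1, by simp, by simp, by norm_num⟩
  · refine ⟨0, zero_le_one, X - C m, by simp, ?_, by simpa using hm⟩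
    simp

theorem exists_mul_one_sub_X_pow_eq {m : ℝ} (hm : 0 ≤ m) :
    ∃ b ≤ 1, ∃ u : ℝ[X], u * (1 - X) ^ b = C (1 - m) - X ∧ u.natDegree + b ≤ 1 ∧
      (-1) ^ b * u.eval 1 < 0 := by
  obtain rfl | hm := hm.eq_or_lt
  · exact ⟨1, le_rfl, 1, by simp, by simp, by norm_num⟩
  · refine ⟨0, zero_le_one, C (1 - m) - X, by simp, ?_, by simpa using hm⟩
    simp only [add_zero]
    compute_degree

section Game

variable {s11 s12 s21 s22 st11 st12 st21 st22 m1 mt1 m2 mt2 : ℝ}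

theorem G1_eq (x y : ℝ) : G1 s11 s12 st11 st12 m1 mt1 x y =
    (g1Const s11 s12 st11 (C (1 - mt1) - X) (X - C m1) 2 2).eval x +
      (g1Slope s12 st12 (C (1 - mt1) - X) (X - C m1) 2 2).eval x * y := by
  simp only [G1, g1Const, g1Slope, eval_add, eval_sub, eval_neg, eval_mul, eval_pow, eval_C,
    eval_X, eval_one]
  ring

theorem G2_eq (x y : ℝ) : G2 s21 s22 st21 st22 m2 mt2 x y =
    ((g2Cubic s21 s22 st21 st22 m2 mt2).map (evalRingHom x)).toPoly.eval y := by
  simp only [G2, g2Cubic, Cubic.map, Cubic.toPoly, coe_evalRingHom, eval_add, eval_sub, eval_neg,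
    eval_mul, eval_pow, eval_C, eval_X, eval_one]
  ring

theorem eval_g2Cubic_a_neg (hs21 : 0 ≤ s21) (hs22 : 0 < s22) (hst21 : 0 ≤ st21)
    (hst22 : 0 ≤ st22) {x : ℝ} (hx : x ∈ Icc (0 : ℝ) 1) :
    (g2Cubic s21 s22 st21 st22 m2 mt2).a.eval x < 0 := by
  simp only [g2Cubic, eval_add, eval_sub, eval_neg, eval_mul, eval_C, eval_X, eval_one]
  nlinarith [hx.1, hx.2]

theorem natDegree_g2Cubic_le (s21 s22 st21 st22 m2 mt2 : ℝ) :
    let g := g2Cubic s21 s22 st21 st22 m2 mt2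
    g.a.natDegree ≤ 1 ∧ g.b.natDegree ≤ 1 ∧ g.c.natDegree ≤ 1 ∧ g.d.natDegree ≤ 1 := by
  refine ⟨?_, ?_, ?_, ?_⟩ <;> simp only [g2Cubic] <;> compute_degree

theorem G2_zero_pos (hs : 0 ≤ s21 + s22) (hst22 : 0 < st22) (hm2 : 0 ≤ m2) (hmt2 : mt2 ≤ 1)
    {y : ℝ} (hy : y < 0) : 0 < G2 s21 s22 st21 st22 m2 mt2 0 y := by
  have : G2 s21 s22 st21 st22 m2 mt2 0 y =
      (1 - mt2 - y) * y ^ 2 * (s21 + s22) + (m2 - y) * (1 - y) ^ 2 * st22 := by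
    simp only [G2]; ring
  rw [this]
  have h1 : 0 < 1 - mt2 - y := by linarith
  have h2 : 0 < m2 - y := by linarith
  have h3 : 0 < 1 - y := by linarith
  exact add_pos_of_nonneg_of_pos (mul_nonneg (by positivity) hs) (by positivity)

theorem G2_one_neg (hs22 : 0 < s22) (hst : 0 ≤ st21 + st22) (hm2 : m2 ≤ 1) (hmt2 : 0 ≤ mt2)
    {y : ℝ} (hy : 1 < y) : G2 s21 s22 st21 st22 m2 mt2 1 y < 0 := by
  have : G2 s21 s22 st21 st22 m2 mt2 1 y =
      -((y - 1 + mt2) * y ^ 2 * s22 + (y - m2) * (1 - y) ^ 2 * (st21 + st22)) := by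
    simp only [G2]; ring
  rw [this, neg_lt_zero]
  have h1 : 0 < y - 1 + mt2 := by linarith
  have h2 : 0 < y - m2 := by linarith
  exact add_pos_of_pos_of_nonneg (by positivity) (by positivity)

theorem g1Const_mul_pow {u v : ℝ[X]} {a b : ℕ} (ha : a ≤ 2) (hb : b ≤ 2) :
    g1Const s11 s12 st11 (u * (1 - X) ^ b) (v * X ^ a) 2 2 =
      X ^ a * (1 - X) ^ b * g1Const s11 s12 st11 u v (2 - a) (2 - b) := by
  have hX : (X : ℝ[X]) ^ 2 = X ^ a * X ^ (2 - a) := by rw [← pow_add, Nat.add_sub_cancel' ha]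
  have hY : (1 - X : ℝ[X]) ^ 2 = (1 - X) ^ b * (1 - X) ^ (2 - b) := by
    rw [← pow_add, Nat.add_sub_cancel' hb]
  simp only [g1Const, hX, hY]
  ring

theorem g1Slope_mul_pow {u v : ℝ[X]} {a b : ℕ} (ha : a ≤ 2) (hb : b ≤ 2) :
    g1Slope s12 st12 (u * (1 - X) ^ b) (v * X ^ a) 2 2 =
      X ^ a * (1 - X) ^ b * g1Slope s12 st12 u v (2 - a) (2 - b) := by
  have hX : (X : ℝ[X]) ^ 2 = X ^ a * X ^ (2 - a) := by rw [← pow_add, Nat.add_sub_cancel' ha]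
  have hY : (1 - X : ℝ[X]) ^ 2 = (1 - X) ^ b * (1 - X) ^ (2 - b) := by
    rw [← pow_add, Nat.add_sub_cancel' hb]
  simp only [g1Slope, hX, hY]
  ring

theorem natDegree_C_mul_mul_X_pow_le {R : Type*} [Semiring R] (c : R) (u : R[X]) (i : ℕ) :
    (C c * u * X ^ i).natDegree ≤ u.natDegree + i :=
  natDegree_mul_le_of_le (natDegree_C_mul_le c u) (natDegree_X_pow_le i)

theorem natDegree_one_sub_X_pow_le {R : Type*} [Ring R] (j : ℕ) :
    ((1 - X : R[X]) ^ j).natDegree ≤ j := by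
  have h : (1 - X : R[X]).natDegree ≤ 1 := by compute_degree
  simpa using natDegree_pow_le_of_le j h

theorem natDegree_C_mul_mul_one_sub_X_pow_le {R : Type*} [Ring R] (c : R) (v : R[X]) (j : ℕ) :
    (C c * v * (1 - X) ^ j).natDegree ≤ v.natDegree + j :=
  natDegree_mul_le_of_le (natDegree_C_mul_le c v) (natDegree_one_sub_X_pow_le j)

theorem natDegree_g1Const_le {u v : ℝ[X]} {i j d : ℕ} (hu : u.natDegree + i ≤ d)
    (hv : v.natDegree + j ≤ d) : (g1Const s11 s12 st11 u v i j).natDegree ≤ d :=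
  (natDegree_sub_le_iff_left ((natDegree_C_mul_mul_one_sub_X_pow_le _ _ _).trans hv)).2
    ((natDegree_C_mul_mul_X_pow_le _ _ _).trans hu)

theorem natDegree_g1Slope_le {u v : ℝ[X]} {i j d : ℕ} (hu : u.natDegree + i ≤ d)
    (hv : v.natDegree + j ≤ d) : (g1Slope s12 st12 u v i j).natDegree ≤ d := by
  rw [g1Slope, natDegree_neg]
  exact natDegree_add_le_of_degree_le ((natDegree_C_mul_mul_X_pow_le _ _ _).trans hu)
    ((natDegree_C_mul_mul_one_sub_X_pow_le _ _ _).trans hv)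

theorem neg_one_pow_mul_eval_zero_mul_eval_one_linResultant_neg
    (hs11 : 0 < s11) (hs12 : 0 < s12) (hs21 : 0 ≤ s21) (hs22 : 0 < s22)
    (hst11 : 0 < st11) (hst12 : 0 < st12) (hst21 : 0 ≤ st21) (hst22 : 0 < st22)
    (hm2 : m2 ∈ Icc (0 : ℝ) 1) (hmt2 : mt2 ∈ Icc (0 : ℝ) 1) {a b : ℕ} (ha : a ≤ 1) (hb : b ≤ 1)
    {u v : ℝ[X]} (hv : (-1) ^ a * v.eval 0 < 0) (hu : (-1) ^ b * u.eval 1 < 0) :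
    (-1) ^ (a + b) *
      ((g2Cubic s21 s22 st21 st22 m2 mt2).linResultant (g1Const s11 s12 st11 u v (2 - a) (2 - b))
        (g1Slope s12 st12 u v (2 - a) (2 - b))).eval 0 *
      ((g2Cubic s21 s22 st21 st22 m2 mt2).linResultant (g1Const s11 s12 st11 u v (2 - a) (2 - b))
        (g1Slope s12 st12 u v (2 - a) (2 - b))).eval 1 < 0 := by
  set P := g1Const s11 s12 st11 u v (2 - a) (2 - b)
  set Q := g1Slope s12 st12 u v (2 - a) (2 - b)
  have heval (x y : ℝ) (h : P.eval x + Q.eval x * y = 0) :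
      ((g2Cubic s21 s22 st21 st22 m2 mt2).linResultant P Q).eval x =
        Q.eval x ^ 3 * G2 s21 s22 st21 st22 m2 mt2 x y := by
    rw [← coe_evalRingHom, Cubic.map_linResultant, coe_evalRingHom,
      Cubic.linResultant_eq_of_add_mul_eq_zero _ h, G2_eq]
    simp [Cubic.toPoly]
  have hP0 : P.eval 0 = -(st11 * v.eval 0) := by
    simp [P, g1Const, zero_pow (by omega : 2 - a ≠ 0)]
  have hQ0 : Q.eval 0 = -(st12 * v.eval 0) := by
    simp [Q, g1Slope, zero_pow (by omega : 2 - a ≠ 0)]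
  have hP1 : P.eval 1 = (s11 + s12) * u.eval 1 := by
    simp [P, g1Const, zero_pow (by omega : 2 - b ≠ 0)]
  have hQ1 : Q.eval 1 = -(s12 * u.eval 1) := by
    simp [Q, g1Slope, zero_pow (by omega : 2 - b ≠ 0)]
  rw [heval 0 (-(st11 / st12)) (by rw [hP0, hQ0]; field_simp; ring),
    heval 1 ((s11 + s12) / s12) (by rw [hP1, hQ1]; field_simp; ring), hQ0, hQ1]
  have hG0 : 0 < G2 s21 s22 st21 st22 m2 mt2 0 (-(st11 / st12)) :=
    G2_zero_pos (by linarith) hst22 hm2.1 hmt2.2 (by have := div_pos hst11 hst12; linarith)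
  have hG1 : G2 s21 s22 st21 st22 m2 mt2 1 ((s11 + s12) / s12) < 0 :=
    G2_one_neg hs22 (by linarith) hm2.2 hmt2.1 (by rw [lt_div_iff₀ hs12]; linarith)
  have hσ : ((-1 : ℝ) ^ a) ^ 2 = 1 := by rw [← pow_mul, mul_comm, pow_mul, neg_one_sq, one_pow]
  have hτ : ((-1 : ℝ) ^ b) ^ 2 = 1 := by rw [← pow_mul, mul_comm, pow_mul, neg_one_sq, one_pow]
  set g₀ := G2 s21 s22 st21 st22 m2 mt2 0 (-(st11 / st12))
  set g₁ := G2 s21 s22 st21 st22 m2 mt2 1 ((s11 + s12) / s12)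
  set k := (st12 * s12) ^ 3 * v.eval 0 ^ 3 * u.eval 1 ^ 3 * g₀ * g₁
  have key : (-1) ^ (a + b) * ((-(st12 * v.eval 0)) ^ 3 * g₀) * ((-(s12 * u.eval 1)) ^ 3 * g₁) =
      (st12 * s12) ^ 3 * ((-1) ^ a * v.eval 0 * ((-1) ^ b * u.eval 1)) ^ 3 * g₀ * g₁ := by
    linear_combination (-k * (-1) ^ a * ((-1) ^ b) ^ 3) * hσ + (-k * (-1) ^ a * (-1) ^ b) * hτ
  rw [key]
  exact mul_neg_of_pos_of_neg (mul_pos (mul_pos (pow_pos (mul_pos hst12 hs12) 3)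
    (pow_pos (mul_pos_of_neg_of_neg hv hu) 3)) hG0) hG1

theorem card_roots_filter_Icc_linResultant_le_nine
    (hs11 : 0 < s11) (hs12 : 0 < s12) (hs21 : 0 ≤ s21) (hs22 : 0 < s22)
    (hst11 : 0 < st11) (hst12 : 0 < st12) (hst21 : 0 ≤ st21) (hst22 : 0 < st22)
    (hm1 : 0 ≤ m1) (hmt1 : 0 ≤ mt1) (hm2 : m2 ∈ Icc (0 : ℝ) 1) (hmt2 : mt2 ∈ Icc (0 : ℝ) 1) :
    (g2Cubic s21 s22 st21 st22 m2 mt2).linResultant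
        (g1Const s11 s12 st11 (C (1 - mt1) - X) (X - C m1) 2 2)
        (g1Slope s12 st12 (C (1 - mt1) - X) (X - C m1) 2 2) ≠ 0 ∧
    Multiset.card (((g2Cubic s21 s22 st21 st22 m2 mt2).linResultant
        (g1Const s11 s12 st11 (C (1 - mt1) - X) (X - C m1) 2 2)
        (g1Slope s12 st12 (C (1 - mt1) - X) (X - C m1) 2 2)).roots.filter
          (· ∈ Icc (0 : ℝ) 1)) ≤ 9 := by
  obtain ⟨a, ha, v, hv, hvdeg, hv0⟩ := exists_mul_X_pow_eq_X_sub_C hm1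
  obtain ⟨b, hb, u, hu, hudeg, hu1⟩ := exists_mul_one_sub_X_pow_eq hmt1
  rw [← hv, ← hu, g1Const_mul_pow (by omega) (by omega), g1Slope_mul_pow (by omega) (by omega),
    Cubic.linResultant_mul]
  set F := (g2Cubic s21 s22 st21 st22 m2 mt2).linResultant
    (g1Const s11 s12 st11 u v (2 - a) (2 - b)) (g1Slope s12 st12 u v (2 - a) (2 - b))
  obtain ⟨hga, hgb, hgc, hgd⟩ := natDegree_g2Cubic_le s21 s22 st21 st22 m2 mt2
  have hdeg : F.natDegree ≤ 10 - 3 * (a + b) :=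
    (Cubic.natDegree_linResultant_le hga hgb hgc hgd
      (natDegree_g1Const_le (d := 3 - (a + b)) (by omega) (by omega))
      (natDegree_g1Slope_le (by omega) (by omega))).trans (by omega)
  have hsign : (-1) ^ (10 - 3 * (a + b)) * F.eval 0 * F.eval 1 < 0 := by
    have hpow : (-1 : ℝ) ^ (10 - 3 * (a + b)) = (-1) ^ (a + b) := by
      interval_cases a <;> interval_cases b <;> norm_num
    rw [hpow]
    exact neg_one_pow_mul_eval_zero_mul_eval_one_linResultant_neg hs11 hs12 hs21 hs22 hst11
      hst12 hst21 hst22 hm2 hmt2 ha hb hv0 hu1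
  have hF : F ≠ 0 := by
    rintro h
    simp [h] at hsign
  have hR : (X ^ a * (1 - X) ^ b : ℝ[X]) ^ 3 ≠ 0 := by
    have h1X : (1 - X : ℝ[X]) ≠ 0 := fun h => by simpa using congrArg (eval 0) h
    exact pow_ne_zero 3 (mul_ne_zero (pow_ne_zero a X_ne_zero) (pow_ne_zero b h1X))
  have hRdeg : ((X ^ a * (1 - X) ^ b : ℝ[X]) ^ 3).natDegree ≤ 3 * (a + b) :=
    natDegree_pow_le_of_le 3
      (natDegree_mul_le_of_le (natDegree_X_pow_le a) (natDegree_one_sub_X_pow_le b))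
  refine ⟨mul_ne_zero hR hF, ?_⟩
  have := card_roots_filter_mul_le (mul_ne_zero hR hF) (Icc (0 : ℝ) 1)
  have := card_roots_filter_Icc_lt hdeg hsign
  omega

end Game

theorem equilibria_finite_card_le_nine
    (s11 s12 s21 s22 st11 st12 st21 st22 m1 mt1 m2 mt2 : ℝ)
    (hs11 : 0 < s11) (hs12 : 0 < s12) (hs21 : 0 < s21) (hs22 : 0 < s22)
    (hst11 : 0 < st11) (hst12 : 0 < st12) (hst21 : 0 < st21) (hst22 : 0 < st22)
    (hm1 : m1 ∈ Set.Icc (0:ℝ) 1) (hmt1 : mt1 ∈ Set.Icc (0:ℝ) 1)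
    (hm2 : m2 ∈ Set.Icc (0:ℝ) 1) (hmt2 : mt2 ∈ Set.Icc (0:ℝ) 1) :
    ({p : ℝ × ℝ | p ∈ Set.Icc (0:ℝ) 1 ×ˢ Set.Icc (0:ℝ) 1 ∧
        G1 s11 s12 st11 st12 m1 mt1 p.1 p.2 = 0 ∧
        G2 s21 s22 st21 st22 m2 mt2 p.1 p.2 = 0}).Finite ∧
    ({p : ℝ × ℝ | p ∈ Set.Icc (0:ℝ) 1 ×ˢ Set.Icc (0:ℝ) 1 ∧
        G1 s11 s12 st11 st12 m1 mt1 p.1 p.2 = 0 ∧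
        G2 s21 s22 st21 st22 m2 mt2 p.1 p.2 = 0}).ncard ≤ 9 := by
  obtain ⟨hF, hcard⟩ := card_roots_filter_Icc_linResultant_le_nine hs11 hs12 hs21.le hs22 hst11
    hst12 hst21.le hst22 hm1.1 hmt1.1 hm2 hmt2
  refine (Cubic.ncard_le_card_roots_linResultant hF
    (fun x hx => (eval_g2Cubic_a_neg hs21.le hs22 hst21.le hst22.le hx).ne) ?_).imp_right
    (·.trans hcard)
  rintro p ⟨hp, h1, h2⟩
  exact ⟨hp.1, (G1_eq _ _).symm.trans h1, (G2_eq _ _).symm.trans h2⟩
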